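/- arXiv:1403.0787 — 4 statements merged into one kernel-verified Lean document; each statement's English description precedes it below -/
import Mathlib

section
/- Let 2 ≤ h < g be fixed integers such that h divides g and h and g are multiplicatively independent. Then for every ε > 0 there exist a constant c > 0 and a real number x₀ such that for all real x ≥ x₀, the number of positive integers N ≤ x that are palindromes in base g but are NOT palindromes in base h is at least c·x^{1/2−ε}. -/
/-- The digit-reversal of `a` in base `b`. -/
def revDigits (b a : ℕ) : ℕ := Nat.ofDigits b ((Nat.digits b a).reverse)

/-- `a` is a palindrome in base `b`. -/
def IsPalindromeBase (b a : ℕ) : Prop := Nat.digits b a = (Nat.digits b a).reverse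

/-- `u` and `v` are multiplicatively independent. -/
def MulIndep (u v : ℕ) : Prop := ∀ x y : ℕ, u ^ x = v ^ y → x = 0 ∧ y = 0

lemma ofDigits_replicate_zero (b k : ℕ) : Nat.ofDigits b (List.replicate k 0) = 0 := by
  induction k with
  | zero => simp
  | succ n ih => simp [List.replicate_succ, Nat.ofDigits_cons, ih]

lemma digits_len_le_of_lt_pow {g m k : ℕ} (hg1 : 1 < g) (hm : m < g ^ k) :
    (Nat.digits g m).length ≤ k := by
  rcases eq_or_ne m 0 with rfl | h0
  · simp
  · rw [Nat.digits_len g m hg1 h0]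
    have := (Nat.log_lt_iff_lt_pow hg1 h0).mpr hm
    omega

private def W (g k m : ℕ) : List ℕ :=
  Nat.digits g m ++ List.replicate (k - (Nat.digits g m).length) 0

private def L (g h k m : ℕ) : List ℕ := [h] ++ W g k m ++ (W g k m).reverse ++ [h]

private def F (g h k m : ℕ) : ℕ := Nat.ofDigits g (L g h k m)

lemma W_len {g k m : ℕ} (hg1 : 1 < g) (hm : m < g ^ k) : (W g k m).length = k := by
  have := digits_len_le_of_lt_pow hg1 hm
  simp [W]; omega

lemma L_mem_lt {g h k : ℕ} (hh : 1 ≤ h) (hg : h < g) {m d : ℕ} (hd : d ∈ L g h k m) :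
    d < g := by
  have hg1 : 1 < g := lt_of_le_of_lt hh hg
  simp only [L, W, List.mem_append, List.mem_cons, List.mem_reverse,
    List.mem_replicate, List.mem_singleton, List.not_mem_nil, or_false] at hd
  have hdig : ∀ x ∈ Nat.digits g m, x < g := fun x hx => Nat.digits_lt_base hg1 hx
  rcases hd with ((rfl | hd | ⟨-, rfl⟩) | (hd | ⟨-, rfl⟩)) | rfl
  · omega
  · exact hdig d hd
  · omega
  · exact hdig d hd
  · omega
  · omega

lemma L_ne_nil (g h k m : ℕ) : L g h k m ≠ [] := by simp [L]

lemma L_getLast (g h k m : ℕ) (hne : L g h k m ≠ []) : (L g h k m).getLast hne = h := by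
  simp [L]

lemma L_reverse (g h k m : ℕ) : (L g h k m).reverse = L g h k m := by
  simp [L, List.reverse_append]

lemma L_len {g h k m : ℕ} (hg1 : 1 < g) (hm : m < g ^ k) :
    (L g h k m).length = 2 * k + 2 := by
  simp [L, W_len hg1 hm]; ring

lemma digits_F {g h k : ℕ} (hh : 1 ≤ h) (hg : h < g) (m : ℕ) :
    Nat.digits g (F g h k m) = L g h k m := by
  refine Nat.digits_ofDigits g (lt_of_le_of_lt hh hg) _
    (fun l hl => L_mem_lt hh hg hl) ?_
  intro hne
  rw [L_getLast]
  omega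

lemma F_lt {g h k : ℕ} (hh : 1 ≤ h) (hg : h < g) {m : ℕ} (hm : m < g ^ k) :
    F g h k m < g ^ (2 * k + 2) := by
  have hg1 : 1 < g := lt_of_le_of_lt hh hg
  have := Nat.ofDigits_lt_base_pow_length (l := L g h k m) hg1
    (fun x hx => L_mem_lt hh hg hx)
  rwa [L_len hg1 hm] at this

lemma F_ne_zero {g h k : ℕ} (hh : 1 ≤ h) (hg : h < g) (m : ℕ) : F g h k m ≠ 0 := by
  intro h0
  have := digits_F (k := k) (m := m) hh hg
  rw [h0] at this
  rw [Nat.digits_zero] at this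
  exact L_ne_nil g h k m this.symm

lemma F_palindrome_g {g h k : ℕ} (hh : 1 ≤ h) (hg : h < g) (m : ℕ) :
    IsPalindromeBase g (F g h k m) := by
  unfold IsPalindromeBase
  rw [digits_F hh hg, L_reverse]

lemma h_dvd_F {g h k : ℕ} (hdvd : h ∣ g) (m : ℕ) : h ∣ F g h k m := by
  have hL : L g h k m = h :: (W g k m ++ (W g k m).reverse ++ [h]) := by simp [L]
  unfold F
  rw [hL, Nat.ofDigits_cons]
  exact Nat.dvd_add dvd_rfl (Dvd.dvd.mul_right hdvd _)

lemma F_not_palindrome_h {g h k : ℕ} (hh : 2 ≤ h) (hg : h < g) (hdvd : h ∣ g) (m : ℕ) :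
    ¬ IsPalindromeBase h (F g h k m) := by
  intro hpal
  set N := F g h k m with hN
  have hN0 : N ≠ 0 := F_ne_zero (by omega) hg m
  have hhd : Nat.digits h N = N % h :: Nat.digits h (N / h) :=
    Nat.digits_def' (by omega) (Nat.pos_of_ne_zero hN0)
  have hmod : N % h = 0 := Nat.mod_eq_zero_of_dvd (h_dvd_F hdvd m)
  have hne : Nat.digits h N ≠ [] := Nat.digits_ne_nil_iff_ne_zero.mpr hN0
  have h1 : (Nat.digits h N).getLast hne ≠ 0 := Nat.getLast_digit_ne_zero h hN0
  apply h1
  rw [List.getLast_eq_iff_getLast?_eq_some, hpal, List.getLast?_reverse, hhd]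
  simp [hmod]

lemma take_drop_L {g h k m : ℕ} (hg1 : 1 < g) (hm : m < g ^ k) :
    ((L g h k m).drop 1).take k = W g k m := by
  have hlen := W_len hg1 hm
  show ((([h] ++ W g k m ++ (W g k m).reverse ++ [h]).drop 1)).take k = W g k m
  rw [List.append_assoc, List.append_assoc, List.singleton_append, List.drop_succ_cons,
    List.drop_zero]
  exact List.take_left' hlen

lemma ofDigits_W (g k m : ℕ) : Nat.ofDigits g (W g k m) = m := by
  simp [W, Nat.ofDigits_append, ofDigits_replicate_zero, Nat.ofDigits_digits]

lemma count_key {g h k n : ℕ} (hh : 2 ≤ h) (hg : h < g) (hdvd : h ∣ g)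
    [DecidablePred fun N => IsPalindromeBase g N ∧ ¬ IsPalindromeBase h N]
    (hn : g ^ (2 * k + 2) ≤ n) :
    g ^ k ≤ ((Finset.Icc 1 n).filter
      (fun N => IsPalindromeBase g N ∧ ¬ IsPalindromeBase h N)).card := by
  have hg1 : 1 < g := by omega
  have hh1 : 1 ≤ h := by omega
  have key := Finset.card_le_card_of_injOn (f := F g h k) (s := Finset.range (g ^ k))
    (t := (Finset.Icc 1 n).filter (fun N => IsPalindromeBase g N ∧ ¬ IsPalindromeBase h N))
    ?_ ?_
  · simpa using key
  · intro m hm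
    rw [Finset.mem_coe, Finset.mem_range] at hm
    rw [Finset.mem_coe, Finset.mem_filter, Finset.mem_Icc]
    refine ⟨⟨Nat.one_le_iff_ne_zero.mpr (F_ne_zero hh1 hg m), ?_⟩,
      F_palindrome_g hh1 hg m, F_not_palindrome_h hh hg hdvd m⟩
    exact le_trans (Nat.le_of_lt (F_lt hh1 hg hm)) hn
  · intro m hm m' hm' heq
    rw [Finset.mem_coe, Finset.mem_range] at hm hm'
    have hL : L g h k m = L g h k m' := by
      rw [← digits_F hh1 hg, ← digits_F hh1 hg, heq]
    have hW : W g k m = W g k m' := by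
      rw [← take_drop_L hg1 hm, ← take_drop_L hg1 hm', hL]
    calc m = Nat.ofDigits g (W g k m) := (ofDigits_W g k m).symm
      _ = Nat.ofDigits g (W g k m') := by rw [hW]
      _ = m' := ofDigits_W g k m'

open scoped Classical in
theorem many_nonsimultaneous_palindromes (g h : ℕ)
    (hh : 2 ≤ h) (hg : h < g) (hdvd : h ∣ g) (hindep : MulIndep h g)
    (ε : ℝ) (hε : 0 < ε) :
    ∃ c : ℝ, 0 < c ∧ ∃ x₀ : ℝ, ∀ x : ℝ, x₀ ≤ x →
      c * x ^ ((1 : ℝ) / 2 - ε) ≤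
        (((Finset.Icc 1 ⌊x⌋₊).filter
          (fun N => IsPalindromeBase g N ∧ ¬ IsPalindromeBase h N)).card : ℝ) := by
  have hg1 : 1 < g := lt_of_le_of_lt (by omega) hg
  have hgR : (1:ℝ) < (g:ℝ) := by exact_mod_cast hg1
  have hgR0 : (0:ℝ) < (g:ℝ) := by linarith
  refine ⟨((g:ℝ)^2)⁻¹, by positivity, ((g:ℝ))^2, fun x hx => ?_⟩
  have hx1 : (1:ℝ) ≤ x := le_trans (by nlinarith) hx
  have hx0 : (0:ℝ) ≤ x := by linarith
  set n := ⌊x⌋₊ with hn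
  have hng : g ^ 2 ≤ n := by
    rw [hn]
    exact Nat.le_floor (by exact_mod_cast hx)
  have hn0 : n ≠ 0 := by
    have : 1 ≤ g ^ 2 := Nat.one_le_pow _ _ (by omega)
    omega
  set Lg := Nat.log g n with hLg
  have hL2 : 2 ≤ Lg := (Nat.le_log_iff_pow_le hg1 hn0).mpr hng
  set k := Lg / 2 - 1 with hk
  have h2k2 : g ^ (2 * k + 2) ≤ n := by
    calc g ^ (2 * k + 2) ≤ g ^ Lg :=
          Nat.pow_le_pow_right (by omega) (by omega)
      _ ≤ n := Nat.pow_log_le_self g hn0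
  have hup : n < g ^ (2 * k + 4) :=
    lt_of_lt_of_le (Nat.lt_pow_succ_log_self hg1 n)
      (Nat.pow_le_pow_right (by omega) (by omega))
  have hxlt : x ≤ ((g:ℝ)) ^ (2 * k + 4) := by
    have h1 : x < (n : ℝ) + 1 := Nat.lt_floor_add_one x
    have h2 : (n : ℝ) + 1 ≤ ((g : ℕ) : ℝ) ^ (2 * k + 4) := by
      have : n + 1 ≤ g ^ (2 * k + 4) := hup
      exact_mod_cast this
    linarith
  have hcount : g ^ k ≤ ((Finset.Icc 1 n).filter
      (fun N => IsPalindromeBase g N ∧ ¬ IsPalindromeBase h N)).card :=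
    count_key hh hg hdvd h2k2
  have hcountR : ((g:ℝ)) ^ k ≤ (((Finset.Icc 1 n).filter
      (fun N => IsPalindromeBase g N ∧ ¬ IsPalindromeBase h N)).card : ℝ) := by
    exact_mod_cast hcount
  refine le_trans ?_ hcountR
  have step1 : x ^ ((1:ℝ)/2 - ε) ≤ x ^ ((1:ℝ)/2) :=
    Real.rpow_le_rpow_of_exponent_le hx1 (by linarith)
  have step2 : x ^ ((1:ℝ)/2) ≤ ((g:ℝ) ^ (2 * k + 4)) ^ ((1:ℝ)/2) :=
    Real.rpow_le_rpow hx0 hxlt (by norm_num)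
  have step3 : ((g:ℝ) ^ (2 * k + 4)) ^ ((1:ℝ)/2) = (g:ℝ) ^ (k + 2) := by
    have e1 : (g:ℝ) ^ (2 * k + 4) = ((g:ℝ) ^ (k + 2)) ^ (2:ℕ) := by
      rw [← pow_mul]; ring_nf
    rw [e1, ← Real.rpow_natCast ((g:ℝ) ^ (k + 2)) 2, ← Real.rpow_mul (by positivity)]
    norm_num
  have step4 : ((g:ℝ)^2)⁻¹ * (g:ℝ) ^ (k + 2) = (g:ℝ) ^ k := by
    rw [pow_add]
    field_simp
  calc ((g:ℝ)^2)⁻¹ * x ^ ((1:ℝ)/2 - ε)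
      ≤ ((g:ℝ)^2)⁻¹ * ((g:ℝ) ^ (2 * k + 4)) ^ ((1:ℝ)/2) := by
        apply mul_le_mul_of_nonneg_left (le_trans step1 step2) (by positivity)
    _ = (g:ℝ) ^ k := by rw [step3, step4]
end

section
/- Let 2 ≤ h < g be integers such that h divides g and h and g are multiplicatively independent. Let n ≥ m+1 be positive integers and let N be a palindrome in base g of the form N = a·g^n + Σ_{i=0}^{n−m−1} a_i g^i with digits a_i ∈ {0,…,g−1}, where g^{n−m−1} ≤ a < g^{n−m}. Assume m > log(ga)/log h, set b = rev_h(rev_g(a)), α = a/b (a positive rational number), and k = ⌊(log N − log b)/log h⌋. If α, g and h are multiplicatively independent (i.e. α^u·g^v·h^w = 1 with integers u, v, w forces u = v = w = 0) and N is a palindrome in base h, then |log α − k·log h + n·log g| < (11/9)·h^{−m}. -/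
lemma aux_sum_lt (g : ℕ) (hg : 1 < g) (d : ℕ → ℕ) (hd : ∀ i, d i < g) :
    ∀ t, ∑ i ∈ Finset.range t, d i * g ^ i < g ^ t := by
  intro t
  induction t with
  | zero => simp
  | succ t ih =>
    rw [Finset.sum_range_succ, pow_succ]
    have h1 : d t * g ^ t ≤ (g - 1) * g ^ t :=
      Nat.mul_le_mul_right _ (Nat.le_sub_one_of_lt (hd t))
    have h2 : g ^ t + (g - 1) * g ^ t = g * g ^ t := by
      rw [Nat.sub_one_mul]
      have : g ^ t ≤ g * g ^ t := Nat.le_mul_of_pos_left _ (by omega)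
      omega
    have h5 : g ^ t * g = g * g ^ t := mul_comm _ _
    omega

lemma aux_len_le {b p m : ℕ} (hb : 1 < b) (hm : m < b ^ p) : (Nat.digits b m).length ≤ p := by
  by_contra hlt
  push_neg at hlt
  rcases Nat.eq_zero_or_pos m with rfl | hm0
  · simp at hlt
  have h1 : b ^ (Nat.digits b m).length ≤ b * m := Nat.base_pow_length_digits_le b m hb (by omega)
  have h2 : b * m < b * b ^ p := (Nat.mul_lt_mul_left (by omega : 0 < b)).mpr hm
  have h3 : b * b ^ p = b ^ (p + 1) := by ring
  have h4 : b ^ (Nat.digits b m).length < b ^ (p + 1) := by omega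
  have := (Nat.pow_lt_pow_iff_right hb).mp h4
  omega

lemma aux_pow_len_le {b m : ℕ} (hb : 1 < b) (hm : m ≠ 0) :
    b ^ ((Nat.digits b m).length - 1) ≤ m := by
  have h1 : b ^ (Nat.digits b m).length ≤ b * m := Nat.base_pow_length_digits_le b m hb hm
  have h2 : (Nat.digits b m).length ≠ 0 := by
    simp [Nat.digits_ne_nil_iff_ne_zero, hm, List.length_eq_zero_iff]
  have h3 : b ^ (Nat.digits b m).length = b * b ^ ((Nat.digits b m).length - 1) := by
    rw [← pow_succ']
    congr 1
    omega
  rw [h3] at h1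
  exact Nat.le_of_mul_le_mul_left h1 (by omega)

lemma aux_ofDigits_replicate (b t : ℕ) : Nat.ofDigits b (List.replicate t 0) = 0 := by
  induction t with
  | zero => simp
  | succ t ih => simp [List.replicate_succ, Nat.ofDigits_cons, ih]

theorem main_lemma_indep_case (g h a m n N : ℕ) (d : ℕ → ℕ)
    (hh : 2 ≤ h) (hg : h < g) (hdvd : h ∣ g) (hindep : MulIndep h g)
    (hm : 0 < m) (hn : m + 1 ≤ n)
    (hd : ∀ i, d i < g)
    (ha : g ^ (n - m - 1) ≤ a) (ha' : a < g ^ (n - m))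
    (hN : N = a * g ^ n + ∑ i ∈ Finset.range (n - m), d i * g ^ i)
    (hpalg : IsPalindromeBase g N)
    (hmlog : (m : ℝ) > Real.log ((g : ℝ) * a) / Real.log h)
    (b : ℕ) (hb : b = revDigits h (revDigits g a))
    (α : ℚ) (hα : α = (a : ℚ) / (b : ℚ))
    (k : ℤ) (hk : k = ⌊(Real.log N - Real.log b) / Real.log h⌋)
    (hmulind : ∀ u v w : ℤ,
      (α : ℝ) ^ u * (g : ℝ) ^ v * (h : ℝ) ^ w = 1 → u = 0 ∧ v = 0 ∧ w = 0)
    (hpalh : IsPalindromeBase h N) :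
    |Real.log (α : ℝ) - (k : ℝ) * Real.log h + (n : ℝ) * Real.log g| <
      11 / 9 * (h : ℝ) ^ (-(m : ℤ)) := by
  clear hindep hmulind
  have hh1 : 1 < h := hh
  have hg1 : 1 < g := lt_trans hh1 hg
  obtain ⟨c, hgc⟩ := hdvd
  have hc0 : c ≠ 0 := by rintro rfl; simp at hgc; omega
  have ha0 : a ≠ 0 := by
    have : 0 < g ^ (n - m - 1) := Nat.pow_pos (by omega)
    omega
  have hgR : (0:ℝ) < (g:ℝ) := by exact_mod_cast (by omega : 0 < g)
  have hhR : (0:ℝ) < (h:ℝ) := by exact_mod_cast (by omega : 0 < h)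
  have haR : (0:ℝ) < (a:ℝ) := by exact_mod_cast Nat.pos_of_ne_zero ha0
  set D := ∑ i ∈ Finset.range (n - m), d i * g ^ i with hDdef
  have hDlt : D < g ^ (n - m) := aux_sum_lt g hg1 d hd _
  have hNg : N = D + g ^ n * a := by rw [hN]; ring
  have hN0 : N ≠ 0 := by
    have : 0 < g ^ n * a := Nat.mul_pos (Nat.pow_pos (by omega)) (by omega)
    omega
  -- `h ^ m > g * a`
  have hlogh : 0 < Real.log h := Real.log_pos (by exact_mod_cast hh1)
  have hgalt : g * a < h ^ m := by
    have hga_pos : (0:ℝ) < (g:ℝ) * (a:ℝ) := mul_pos hgR haR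
    have h1 : Real.log ((g:ℝ) * a) < (m:ℝ) * Real.log h := by
      rw [gt_iff_lt, div_lt_iff₀ hlogh] at hmlog
      linarith
    rw [← Real.log_pow] at h1
    have h2 : (g:ℝ) * a < (h:ℝ) ^ m :=
      (Real.log_lt_log_iff hga_pos (pow_pos hhR m)).mp h1
    exact_mod_cast h2
  have hDh : D < h ^ m := by
    calc D < g ^ (n - m) := hDlt
    _ = g * g ^ (n - m - 1) := by rw [← pow_succ']; congr 1; omega
    _ ≤ g * a := Nat.mul_le_mul_left _ ha
    _ < h ^ m := hgalt
  -- length of digits of `a` in base `g`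
  have hlena : (Nat.digits g a).length = n - m := by
    have h1 : (Nat.digits g a).length ≤ n - m := aux_len_le hg1 ha'
    have h2 : a < g ^ (Nat.digits g a).length := Nat.lt_base_pow_length_digits hg1
    by_contra hne
    have h3 : (Nat.digits g a).length ≤ n - m - 1 := by omega
    have h4 : g ^ (Nat.digits g a).length ≤ g ^ (n - m - 1) :=
      Nat.pow_le_pow_right (by omega) h3
    omega
  -- digits of `N` in base `g`
  have hsg : (Nat.digits g D).length ≤ n - m := aux_len_le hg1 hDlt
  have hdigg : Nat.digits g N =
      Nat.digits g D ++ List.replicate (n - (Nat.digits g D).length) 0 ++ Nat.digits g a := by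
    rw [Nat.digits_append_zeroes_append_digits hg1 (Nat.pos_of_ne_zero ha0)]
    have he : (Nat.digits g D).length + (n - (Nat.digits g D).length) = n := by omega
    rw [he, ← hNg]
  -- `D` is the reversal of `a` in base `g`
  have hrevlt : revDigits g a < g ^ (n - m) := by
    have h1 : ∀ x ∈ (Nat.digits g a).reverse, x < g := fun x hx =>
      Nat.digits_lt_base hg1 (List.mem_reverse.mp hx)
    have h2 := Nat.ofDigits_lt_base_pow_length hg1 h1
    rwa [List.length_reverse, hlena] at h2
  have hDrev : D = revDigits g a := by
    have e1 : (Nat.digits g N).reverse = (Nat.digits g a).reverse ++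
        (List.replicate (n - (Nat.digits g D).length) 0 ++ (Nat.digits g D).reverse) := by
      rw [hdigg]
      simp [List.reverse_append, List.reverse_replicate, List.append_assoc]
    have e2 : N = revDigits g a + g ^ (n - m) *
        Nat.ofDigits g (List.replicate (n - (Nat.digits g D).length) 0 ++
          (Nat.digits g D).reverse) := by
      conv_lhs => rw [← Nat.ofDigits_digits g N, hpalg, e1]
      rw [Nat.ofDigits_append, List.length_reverse, hlena]
      rfl
    have e3 : N % g ^ (n - m) = revDigits g a := by
      rw [e2, Nat.add_mul_mod_self_left, Nat.mod_eq_of_lt hrevlt]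
    have e4 : N % g ^ (n - m) = D := by
      have heq : n - m + m = n := by omega
      have : N = D + g ^ (n - m) * (g ^ m * a) := by
        rw [hNg, ← mul_assoc, ← pow_add, heq]
      rw [this, Nat.add_mul_mod_self_left, Nat.mod_eq_of_lt hDlt]
    omega
  -- base-h decomposition
  have hNh : N = D + h ^ n * (c ^ n * a) := by
    rw [hNg, hgc, mul_pow]
    ring
  have hsh : (Nat.digits h D).length ≤ m := aux_len_le hh1 hDh
  set s := (Nat.digits h D).length with hsdef
  have hT0 : c ^ n * a ≠ 0 := Nat.mul_ne_zero (pow_ne_zero _ hc0) ha0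
  set T := Nat.digits h (c ^ n * a) with hTdef
  have hdigh : Nat.digits h N = Nat.digits h D ++ List.replicate (n - s) 0 ++ T := by
    rw [hTdef, Nat.digits_append_zeroes_append_digits hh1 (Nat.pos_of_ne_zero hT0)]
    have he : s + (n - s) = n := by omega
    rw [← hsdef, he, ← hNh]
  -- last digit of N in base h is nonzero, equals N % h
  have hNmodh : N % h ≠ 0 := by
    have hnil : Nat.digits h N ≠ [] := Nat.digits_ne_nil_iff_ne_zero.mpr hN0
    have hlast : (Nat.digits h N).getLast hnil ≠ 0 := Nat.getLast_digit_ne_zero h hN0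
    have hhead : (Nat.digits h N).head? = some (N % h) := by
      rw [Nat.digits_def' hh1 (Nat.pos_of_ne_zero hN0)]
      rfl
    have e : (Nat.digits h N).getLast? = some (N % h) := by
      conv_lhs => rw [hpalh]
      rw [List.getLast?_reverse, hhead]
    rw [List.getLast?_eq_getLast hnil] at e
    intro h0
    rw [h0] at e
    exact hlast (Option.some_injective _ e)
  have hDmodh : D % h ≠ 0 := by
    have e : N % h = D % h := by
      have hn' : h ^ n = h * h ^ (n - 1) := by
        rw [← pow_succ']
        congr 1
        omega
      rw [hNh, hn', mul_assoc, Nat.add_mul_mod_self_left]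
    omega
  have hD0 : D ≠ 0 := by
    intro h0
    rw [h0] at hDmodh
    simp at hDmodh
  have hDnil : Nat.digits h D ≠ [] := Nat.digits_ne_nil_iff_ne_zero.mpr hD0
  have hs1 : 1 ≤ s := by
    rw [hsdef]
    exact List.length_pos_iff.mpr hDnil
  -- b is the base-h reversal of D
  have hbD : b = Nat.ofDigits h ((Nat.digits h D).reverse) := by
    rw [hb, ← hDrev]
    rfl
  have hdigb : Nat.digits h b = (Nat.digits h D).reverse := by
    rw [hbD]
    refine Nat.digits_ofDigits h hh1 _
      (fun x hx => Nat.digits_lt_base hh1 (List.mem_reverse.mp hx)) (fun hne => ?_)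
    have h1 : (Nat.digits h D).reverse.getLast? = some (D % h) := by
      rw [List.getLast?_reverse, Nat.digits_def' hh1 (Nat.pos_of_ne_zero hD0)]
      rfl
    rw [List.getLast?_eq_getLast hne] at h1
    have h2 := Option.some_injective _ h1
    rw [h2]
    exact hDmodh
  have hblen : (Nat.digits h b).length = s := by rw [hdigb, List.length_reverse]
  have hb0 : b ≠ 0 := by
    rw [← Nat.digits_ne_nil_iff_ne_zero, hdigb]
    simpa using hDnil
  have hblb : h ^ (s - 1) ≤ b := by
    have := aux_pow_len_le hh1 hb0
    rwa [hblen] at this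
  have hbub : b < h ^ s := by
    have := Nat.lt_base_pow_length_digits (m := b) hh1
    rwa [hblen] at this
  -- decomposition N = R + h^(t + (n - s)) * b
  set t := T.length with htdef
  set R := Nat.ofDigits h T.reverse with hRdef
  have hRlt : R < h ^ t := by
    have h1 : ∀ x ∈ T.reverse, x < h := fun x hx =>
      Nat.digits_lt_base hh1 (List.mem_reverse.mp hx)
    have h2 := Nat.ofDigits_lt_base_pow_length hh1 h1
    rwa [List.length_reverse, ← htdef] at h2
  have hNdecomp : N = R + h ^ (t + (n - s)) * b := by
    conv_lhs => rw [← Nat.ofDigits_digits h N, hpalh, hdigh]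
    rw [List.reverse_append, List.reverse_append, List.reverse_replicate,
      Nat.ofDigits_append, Nat.ofDigits_append, aux_ofDigits_replicate,
      List.length_reverse, List.length_replicate, ← htdef, ← hbD]
    rw [pow_add]
    ring
  -- key natural-number inequalities
  have hXpos : 0 < h ^ (t + (n - s)) * b :=
    Nat.mul_pos (Nat.pow_pos (by omega)) (Nat.pos_of_ne_zero hb0)
  have hYpos : 0 < g ^ n * a :=
    Nat.mul_pos (Nat.pow_pos (by omega)) (Nat.pos_of_ne_zero ha0)
  have key1 : R * h ^ m < h ^ (t + (n - s)) * b := by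
    calc R * h ^ m < h ^ t * h ^ m :=
          (Nat.mul_lt_mul_right (Nat.pow_pos (by omega))).mpr hRlt
    _ = h ^ (t + m) := by rw [pow_add]
    _ ≤ h ^ (t + (n - s) + (s - 1)) := Nat.pow_le_pow_right (by omega) (by omega)
    _ = h ^ (t + (n - s)) * h ^ (s - 1) := by rw [pow_add]
    _ ≤ h ^ (t + (n - s)) * b := Nat.mul_le_mul_left _ hblb
  have key2 : D * h ^ m < g ^ n * a := by
    have h1 : h ^ m ≤ g ^ (n - 1) := by
      calc h ^ m ≤ g ^ m := Nat.pow_le_pow_left (le_of_lt hg) m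
      _ ≤ g ^ (n - 1) := Nat.pow_le_pow_right (by omega) (by omega)
    calc D * h ^ m < g ^ (n - m) * h ^ m :=
          (Nat.mul_lt_mul_right (Nat.pow_pos (by omega))).mpr hDlt
    _ ≤ g ^ (n - m) * g ^ (n - 1) := Nat.mul_le_mul_left _ h1
    _ = g ^ n * g ^ (n - m - 1) := by rw [← pow_add, ← pow_add]; congr 1; omega
    _ ≤ g ^ n * a := Nat.mul_le_mul_left _ ha
  have key3 : h ^ (t + (n - s)) * b ≤ N := by omega
  have key4 : g ^ n * a ≤ N := by omega
  have key5 : N < h * (h ^ (t + (n - s)) * b) := by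
    have h1 : R < h ^ (t + (n - s)) * b := by
      calc R < h ^ t := hRlt
      _ ≤ h ^ (t + (n - s)) := Nat.pow_le_pow_right (by omega) (by omega)
      _ ≤ h ^ (t + (n - s)) * b := Nat.le_mul_of_pos_right _ (Nat.pos_of_ne_zero hb0)
    have h2 : 2 * (h ^ (t + (n - s)) * b) ≤ h * (h ^ (t + (n - s)) * b) :=
      Nat.mul_le_mul_right _ hh
    omega
  -- move to the reals
  set e : ℕ := t + (n - s) with hedef
  have hNR : (0:ℝ) < (N:ℝ) := by exact_mod_cast Nat.pos_of_ne_zero hN0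
  have hbR : (0:ℝ) < (b:ℝ) := by exact_mod_cast Nat.pos_of_ne_zero hb0
  have hXR : (0:ℝ) < ((h:ℝ) ^ e * (b:ℝ)) := mul_pos (pow_pos hhR e) hbR
  have hYR : (0:ℝ) < ((g:ℝ) ^ n * (a:ℝ)) := mul_pos (pow_pos hgR n) haR
  have hhm : (h:ℝ) ^ (-(m:ℤ)) = ((h:ℝ) ^ m)⁻¹ := by
    rw [zpow_neg, zpow_natCast]
  have hhmpos : (0:ℝ) < (h:ℝ) ^ m := pow_pos hhR m
  -- u := log N - log X ∈ [0, h^{-m})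
  have hXle : ((h:ℝ) ^ e * (b:ℝ)) ≤ (N:ℝ) := by exact_mod_cast key3
  have hYle : ((g:ℝ) ^ n * (a:ℝ)) ≤ (N:ℝ) := by exact_mod_cast key4
  have hu0 : 0 ≤ Real.log N - Real.log ((h:ℝ) ^ e * b) :=
    sub_nonneg.mpr (Real.log_le_log hXR hXle)
  have hv0 : 0 ≤ Real.log N - Real.log ((g:ℝ) ^ n * a) :=
    sub_nonneg.mpr (Real.log_le_log hYR hYle)
  have hu : Real.log N - Real.log ((h:ℝ) ^ e * b) < (h:ℝ) ^ (-(m:ℤ)) := by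
    have h1 : Real.log N - Real.log ((h:ℝ) ^ e * b) =
        Real.log ((N:ℝ) / ((h:ℝ) ^ e * b)) := (Real.log_div (ne_of_gt hNR) (ne_of_gt hXR)).symm
    have h2 : Real.log ((N:ℝ) / ((h:ℝ) ^ e * b)) ≤ (N:ℝ) / ((h:ℝ) ^ e * b) - 1 :=
      Real.log_le_sub_one_of_pos (div_pos hNR hXR)
    have h3 : (N:ℝ) / ((h:ℝ) ^ e * b) - 1 = (R:ℝ) / ((h:ℝ) ^ e * b) := by
      field_simp
      have : (N:ℝ) = (R:ℝ) + (h:ℝ) ^ e * b := by exact_mod_cast hNdecomp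
      linarith
    have h4 : (R:ℝ) / ((h:ℝ) ^ e * b) < (h:ℝ) ^ (-(m:ℤ)) := by
      rw [hhm, div_lt_iff₀ hXR, inv_mul_eq_div, lt_div_iff₀ hhmpos]
      exact_mod_cast key1
    rw [h1]
    calc Real.log ((N:ℝ) / ((h:ℝ) ^ e * b)) ≤ (N:ℝ) / ((h:ℝ) ^ e * b) - 1 := h2
    _ = (R:ℝ) / ((h:ℝ) ^ e * b) := h3
    _ < (h:ℝ) ^ (-(m:ℤ)) := h4
  have hv : Real.log N - Real.log ((g:ℝ) ^ n * a) < (h:ℝ) ^ (-(m:ℤ)) := by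
    have h1 : Real.log N - Real.log ((g:ℝ) ^ n * a) =
        Real.log ((N:ℝ) / ((g:ℝ) ^ n * a)) := (Real.log_div (ne_of_gt hNR) (ne_of_gt hYR)).symm
    have h2 : Real.log ((N:ℝ) / ((g:ℝ) ^ n * a)) ≤ (N:ℝ) / ((g:ℝ) ^ n * a) - 1 :=
      Real.log_le_sub_one_of_pos (div_pos hNR hYR)
    have h3 : (N:ℝ) / ((g:ℝ) ^ n * a) - 1 = (D:ℝ) / ((g:ℝ) ^ n * a) := by
      field_simp
      have : (N:ℝ) = (D:ℝ) + (g:ℝ) ^ n * a := by exact_mod_cast hNg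
      linarith
    have h4 : (D:ℝ) / ((g:ℝ) ^ n * a) < (h:ℝ) ^ (-(m:ℤ)) := by
      rw [hhm, div_lt_iff₀ hYR, inv_mul_eq_div, lt_div_iff₀ hhmpos]
      exact_mod_cast key2
    rw [h1]
    calc Real.log ((N:ℝ) / ((g:ℝ) ^ n * a)) ≤ (N:ℝ) / ((g:ℝ) ^ n * a) - 1 := h2
    _ = (D:ℝ) / ((g:ℝ) ^ n * a) := h3
    _ < (h:ℝ) ^ (-(m:ℤ)) := h4
  -- log of products
  have hbR0 : (b:ℝ) ≠ 0 := by exact_mod_cast hb0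
  have haR0 : (a:ℝ) ≠ 0 := by exact_mod_cast ha0
  have hlogX : Real.log ((h:ℝ) ^ e * b) = (e:ℝ) * Real.log h + Real.log b := by
    rw [Real.log_mul (ne_of_gt (pow_pos hhR e)) hbR0, Real.log_pow]
  have hlogY : Real.log ((g:ℝ) ^ n * a) = (n:ℝ) * Real.log g + Real.log a := by
    rw [Real.log_mul (ne_of_gt (pow_pos hgR n)) haR0, Real.log_pow]
  -- h^{-m} is small
  have hsmall : (h:ℝ) ^ (-(m:ℤ)) ≤ 1 / 2 := by
    rw [hhm]
    rw [div_eq_inv_mul, mul_one]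
    apply inv_anti₀ (by norm_num)
    calc (2:ℝ) ≤ (h:ℝ) := by exact_mod_cast hh
    _ ≤ (h:ℝ) ^ m := by
        apply le_self_pow₀ (by exact_mod_cast Nat.one_le_of_lt hh1) (by omega)
  have hloghalf : (1:ℝ) / 2 < Real.log h := by
    have h2 : Real.log 2 ≤ Real.log h :=
      Real.log_le_log (by norm_num) (by exact_mod_cast hh)
    have := Real.log_two_gt_d9
    linarith
  -- compute k
  have hkval : k = (e : ℤ) := by
    rw [hk]
    apply Int.floor_eq_iff.mpr
    constructor
    · rw [le_div_iff₀ hlogh]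
      have : Real.log ((h:ℝ) ^ e * b) ≤ Real.log N := Real.log_le_log hXR hXle
      rw [hlogX] at this
      push_cast
      linarith
    · rw [div_lt_iff₀ hlogh]
      have h1 : Real.log N < Real.log (h * ((h:ℝ) ^ e * b)) := by
        apply Real.log_lt_log hNR
        exact_mod_cast key5
      rw [Real.log_mul (ne_of_gt hhR) (ne_of_gt hXR), hlogX] at h1
      push_cast
      linarith
  -- final computation
  have hαR : (α : ℝ) = (a:ℝ) / (b:ℝ) := by
    rw [hα]
    push_cast
    ring
  have hlogα : Real.log (α : ℝ) = Real.log a - Real.log b := by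
    rw [hαR, Real.log_div haR0 hbR0]
  have htarget : Real.log (α : ℝ) - (k : ℝ) * Real.log h + (n : ℝ) * Real.log g =
      (Real.log N - Real.log ((h:ℝ) ^ e * b)) - (Real.log N - Real.log ((g:ℝ) ^ n * a)) := by
    rw [hlogα, hkval, hlogX, hlogY]
    push_cast
    ring
  rw [htarget]
  have habs : |(Real.log N - Real.log ((h:ℝ) ^ e * b)) -
      (Real.log N - Real.log ((g:ℝ) ^ n * a))| < (h:ℝ) ^ (-(m:ℤ)) := by
    rw [abs_sub_lt_iff]
    constructor <;> linarith
  have hzpos : (0:ℝ) < (h:ℝ) ^ (-(m:ℤ)) := by rw [hhm]; exact inv_pos.mpr hhmpos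
  calc |(Real.log N - Real.log ((h:ℝ) ^ e * b)) -
      (Real.log N - Real.log ((g:ℝ) ^ n * a))| < (h:ℝ) ^ (-(m:ℤ)) := habs
  _ < 11 / 9 * (h:ℝ) ^ (-(m:ℤ)) := by linarith
end

section
/- Let 2 ≤ h < g be integers that are multiplicatively independent, let a be a positive integer, and set α = a / rev_h(rev_g(a)), a positive rational number. If α is multiplicatively dependent with g and h (i.e. there exist integers u, v, w, not all zero, with α^u = g^v·h^w), then there exist integers r, s, t with r ≠ 0 such that α^r = g^s·h^t and |r| ≤ log(g)·log(h)·log(agh)/(log 2)³, |s| ≤ log(h)·(log(agh))²/(log 2)³, |t| ≤ log(g)·(log(agh))²/(log 2)³. -/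
lemma ofDigits_pos_of_mem {b : ℕ} (hb : 1 ≤ b) {l : List ℕ} {x : ℕ} (hx : x ∈ l) (hx0 : x ≠ 0) :
    0 < Nat.ofDigits b l := by
  induction l with
  | nil => simp at hx
  | cons d t ih =>
    rw [Nat.ofDigits_cons]
    rcases List.mem_cons.mp hx with rfl | hxt
    · positivity
    · have h1 := ih hxt
      have h2 : 1 * 1 ≤ b * Nat.ofDigits b t := Nat.mul_le_mul hb h1
      omega

lemma revDigits_pos {b m : ℕ} (hb : 2 ≤ b) (hm : 0 < m) : 0 < revDigits b m := by
  have hne : Nat.digits b m ≠ [] := Nat.digits_ne_nil_iff_ne_zero.mpr hm.ne'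
  have hlast := Nat.getLast_digit_ne_zero b hm.ne'
  exact ofDigits_pos_of_mem (by omega)
    (List.mem_reverse.mpr (List.getLast_mem hne)) hlast

lemma revDigits_le {b m : ℕ} (hb : 2 ≤ b) (hm : 0 < m) : revDigits b m ≤ b * m := by
  have h1 : revDigits b m < b ^ (Nat.digits b m).reverse.length :=
    Nat.ofDigits_lt_base_pow_length (by omega)
      (fun x hx => Nat.digits_lt_base (by omega) (List.mem_reverse.mp hx))
  have h2 : b ^ (Nat.digits b m).length ≤ b * m :=
    Nat.base_pow_length_digits_le b m (by omega) hm.ne'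
  rw [List.length_reverse] at h1
  omega

lemma padicValRat_zpow {p : ℕ} [Fact p.Prime] {q : ℚ} (hq : q ≠ 0) (n : ℤ) :
    padicValRat p (q ^ n) = n * padicValRat p q := by
  obtain ⟨m, rfl | rfl⟩ := n.eq_nat_or_neg
  · rw [zpow_natCast, padicValRat.pow q]
  · rw [zpow_neg, zpow_natCast, padicValRat.inv, padicValRat.pow q]; ring

lemma rat_eq_one_of_padicValRat {q : ℚ} (hq : 0 < q)
    (hval : ∀ p : ℕ, p.Prime → padicValRat p q = 0) : q = 1 := by
  have hnum0 : 0 < q.num := Rat.num_pos.mpr hq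
  have key : ∀ p : ℕ, p.Prime → ¬ (p ∣ q.num.natAbs ∧ p ∣ q.den) := by
    rintro p hp ⟨h1, h2⟩
    have : p ∣ Nat.gcd q.num.natAbs q.den := Nat.dvd_gcd h1 h2
    rw [q.reduced] at this
    exact hp.one_lt.ne' (Nat.eq_one_of_dvd_one this)
  have hnum : q.num.natAbs = 1 := by
    rw [Nat.eq_one_iff_not_exists_prime_dvd]
    intro p hp hpd
    haveI : Fact p.Prime := ⟨hp⟩
    have hnd : ¬ p ∣ q.den := fun hd => key p hp ⟨hpd, hd⟩
    have h1 : 1 ≤ padicValNat p q.num.natAbs :=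
      one_le_padicValNat_of_dvd (Int.natAbs_pos.mpr hnum0.ne').ne' hpd
    have h2 : padicValNat p q.den = 0 := padicValNat.eq_zero_of_not_dvd hnd
    have hv := hval p hp
    rw [padicValRat_def] at hv
    unfold padicValInt at hv
    omega
  have hden : q.den = 1 := by
    rw [Nat.eq_one_iff_not_exists_prime_dvd]
    intro p hp hpd
    haveI : Fact p.Prime := ⟨hp⟩
    have hnd : ¬ p ∣ q.num.natAbs := fun hd => key p hp ⟨hd, hpd⟩
    have h1 : 1 ≤ padicValNat p q.den := one_le_padicValNat_of_dvd q.pos.ne' hpd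
    have h2 : padicValNat p q.num.natAbs = 0 := padicValNat.eq_zero_of_not_dvd hnd
    have hv := hval p hp
    rw [padicValRat_def] at hv
    unfold padicValInt at hv
    omega
  have hn1 : q.num = 1 := by omega
  rw [← Rat.num_div_den q, hn1, hden]; norm_num

lemma abs_sub_mul_le1 {x1 y1 x2 y2 M N : ℝ} (h1 : 0 ≤ x1) (h2 : x1 ≤ M) (h3 : 0 ≤ y1)
    (h4 : y1 ≤ N) (h5 : 0 ≤ x2) (h6 : x2 ≤ M) (h7 : 0 ≤ y2) (h8 : y2 ≤ N) :
    |x1 * y1 - x2 * y2| ≤ M * N := by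
  rw [abs_le]; constructor <;> nlinarith

lemma abs_sub_mul_le2 {a1 a2 y1 y2 c N : ℝ} (h1 : |a1| ≤ c) (h2 : |a2| ≤ c) (h3 : 0 ≤ y1)
    (h4 : y1 ≤ N) (h5 : 0 ≤ y2) (h6 : y2 ≤ N) :
    |a1 * y1 - a2 * y2| ≤ 2 * c * N := by
  rw [abs_le] at *; constructor <;> nlinarith

lemma valbound (P n : ℕ) (hP : P.Prime) (hn : 0 < n) :
    (padicValNat P n : ℝ) * Real.log 2 ≤ Real.log n := by
  haveI : Fact P.Prime := ⟨hP⟩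
  have h1 : P ^ padicValNat P n ∣ n := pow_padicValNat_dvd
  have h2 : 2 ^ padicValNat P n ≤ n :=
    le_trans (Nat.pow_le_pow_left hP.two_le _) (Nat.le_of_dvd hn h1)
  have h3 : ((2 : ℝ)) ^ padicValNat P n ≤ (n : ℝ) := by exact_mod_cast h2
  calc (padicValNat P n : ℝ) * Real.log 2 = Real.log (2 ^ padicValNat P n) := by
        rw [Real.log_pow]
    _ ≤ Real.log n := Real.log_le_log (by positivity) h3

set_option maxHeartbeats 1000000 in
theorem dependence_bounds (g h a : ℕ) (hh : 2 ≤ h) (hg : h < g)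
    (hindep : MulIndep h g) (ha : 0 < a)
    (α : ℚ) (hα : α = (a : ℚ) / (revDigits h (revDigits g a) : ℚ))
    (hdep : ∃ u v w : ℤ, ¬ (u = 0 ∧ v = 0 ∧ w = 0) ∧
      (α : ℝ) ^ u = (g : ℝ) ^ v * (h : ℝ) ^ w) :
    ∃ r s t : ℤ, r ≠ 0 ∧ (α : ℝ) ^ r = (g : ℝ) ^ s * (h : ℝ) ^ t ∧
      |(r : ℝ)| ≤ Real.log g * Real.log h * Real.log ((a : ℝ) * g * h) / (Real.log 2) ^ 3 ∧
      |(s : ℝ)| ≤ Real.log h * (Real.log ((a : ℝ) * g * h)) ^ 2 / (Real.log 2) ^ 3 ∧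
      |(t : ℝ)| ≤ Real.log g * (Real.log ((a : ℝ) * g * h)) ^ 2 / (Real.log 2) ^ 3 := by
  obtain ⟨u, v, w, hne, heq⟩ := hdep
  have hg2 : 2 ≤ g := by omega
  set b := revDigits h (revDigits g a) with hbdef
  have hb1 : 0 < revDigits g a := revDigits_pos hg2 ha
  have hb : 0 < b := revDigits_pos hh hb1
  have hble : b ≤ a * g * h := by
    calc b ≤ h * revDigits g a := revDigits_le hh hb1
    _ ≤ h * (g * a) := Nat.mul_le_mul_left h (revDigits_le hg2 ha)
    _ = a * g * h := by ring
  have hαpos : 0 < α := by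
    rw [hα]
    exact div_pos (by exact_mod_cast ha) (by exact_mod_cast hb)
  have hαne : α ≠ 0 := hαpos.ne'
  have hgne : ((g : ℚ)) ≠ 0 := Nat.cast_ne_zero.mpr (by omega)
  have hhne : ((h : ℚ)) ≠ 0 := Nat.cast_ne_zero.mpr (by omega)
  have hg0 : (0 : ℚ) < g := by exact_mod_cast (show 0 < g by omega)
  have hh0 : (0 : ℚ) < h := by exact_mod_cast (show 0 < h by omega)
  have heqQ : α ^ u = (g : ℚ) ^ v * (h : ℚ) ^ w := by
    have hcast : ((α ^ u : ℚ) : ℝ) = (((g : ℚ) ^ v * (h : ℚ) ^ w : ℚ) : ℝ) := by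
      push_cast
      exact heq
    exact_mod_cast hcast
  set G : ℕ → ℤ := fun p => (padicValNat p g : ℤ) with hGdef
  set H : ℕ → ℤ := fun p => (padicValNat p h : ℤ) with hHdef
  set A : ℕ → ℤ := fun p => padicValRat p α with hAdef
  have E : ∀ p : ℕ, p.Prime → u * A p = v * G p + w * H p := by
    intro p hp
    haveI : Fact p.Prime := ⟨hp⟩
    have h1 := congrArg (padicValRat p) heqQ
    rw [padicValRat_zpow hαne,
      padicValRat.mul (zpow_ne_zero _ hgne) (zpow_ne_zero _ hhne),
      padicValRat_zpow hgne, padicValRat_zpow hhne,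
      padicValRat.of_nat, padicValRat.of_nat] at h1
    exact h1
  have hdet : ∃ p q : ℕ, p.Prime ∧ q.Prime ∧ G p * H q - G q * H p ≠ 0 := by
    by_contra hcon
    push_neg at hcon
    obtain ⟨p0, hp0, hp0d⟩ := Nat.exists_prime_and_dvd (show h ≠ 1 by omega)
    haveI : Fact p0.Prime := ⟨hp0⟩
    have hx : 1 ≤ padicValNat p0 h := one_le_padicValNat_of_dvd (by omega) hp0d
    have hgx : g ^ padicValNat p0 h = h ^ padicValNat p0 g := by
      rw [Nat.eq_iff_prime_padicValNat_eq _ _ (pow_ne_zero _ (by omega))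
        (pow_ne_zero _ (by omega))]
      intro P hP
      haveI : Fact P.Prime := ⟨hP⟩
      rw [padicValNat.pow g, padicValNat.pow h]
      have hc := hcon P p0 hP hp0
      simp only [hGdef, hHdef] at hc
      have hc' : padicValNat P g * padicValNat p0 h = padicValNat p0 g * padicValNat P h := by
        have h5 := sub_eq_zero.mp hc
        exact_mod_cast h5
      rw [mul_comm]
      exact hc'
    have := hindep _ _ hgx.symm
    omega
  obtain ⟨p, q, hp, hq, hD⟩ := hdet
  have Ep := E p hp
  have Eq2 := E q hq
  have hu : u ≠ 0 := by
    rintro rfl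
    apply hne
    refine ⟨rfl, ?_, ?_⟩
    · have hv0 : v * (G p * H q - G q * H p) = 0 := by
        linear_combination H p * Eq2 - H q * Ep
      exact (mul_eq_zero.mp hv0).resolve_right hD
    · have hw0 : w * (G p * H q - G q * H p) = 0 := by
        linear_combination G q * Ep - G p * Eq2
      exact (mul_eq_zero.mp hw0).resolve_right hD
  set D := G p * H q - G q * H p with hDdef
  set X := A p * H q - A q * H p with hXdef
  set Y := G p * A q - G q * A p with hYdef
  have hDv : D * v = u * X := by linear_combination H p * Eq2 - H q * Ep
  have hDw : D * w = u * Y := by linear_combination G q * Ep - G p * Eq2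
  have keyval : ∀ P : ℕ, P.Prime → D * A P = X * G P + Y * H P := by
    intro P hP
    have EP := E P hP
    apply mul_left_cancel₀ hu
    linear_combination D * EP + G P * hDv + H P * hDw
  have hβ : α ^ D = (g : ℚ) ^ X * (h : ℚ) ^ Y := by
    have hden : ((g : ℚ) ^ X * (h : ℚ) ^ Y) ≠ 0 :=
      mul_ne_zero (zpow_ne_zero _ hgne) (zpow_ne_zero _ hhne)
    rw [← div_eq_one_iff_eq hden]
    apply rat_eq_one_of_padicValRat
    · exact div_pos (zpow_pos hαpos _) (mul_pos (zpow_pos hg0 _) (zpow_pos hh0 _))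
    · intro P hP
      haveI : Fact P.Prime := ⟨hP⟩
      rw [padicValRat.div (zpow_ne_zero _ hαne) hden,
        padicValRat.mul (zpow_ne_zero _ hgne) (zpow_ne_zero _ hhne),
        padicValRat_zpow hαne, padicValRat_zpow hgne, padicValRat_zpow hhne,
        padicValRat.of_nat, padicValRat.of_nat]
      have kv := keyval P hP
      simp only [hAdef, hGdef, hHdef] at kv
      linarith
  have hreal : (α : ℝ) ^ D = (g : ℝ) ^ X * (h : ℝ) ^ Y := by
    have := congrArg (fun x : ℚ => (x : ℝ)) hβ
    push_cast at this
    exact this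
  -- bounds
  have hgg : (1 : ℝ) < g := by exact_mod_cast (show 1 < g by omega)
  have hhh : (1 : ℝ) < h := by exact_mod_cast (show 1 < h by omega)
  have lg0 : 0 < Real.log g := Real.log_pos hgg
  have lh0 : 0 < Real.log h := Real.log_pos hhh
  set l2 := Real.log 2 with hl2def
  have l2p : 0 < l2 := Real.log_pos (by norm_num)
  set L := Real.log ((a : ℝ) * g * h) with hLdef
  have h4 : (4 : ℝ) ≤ (a : ℝ) * g * h := by
    have h4n : (4 : ℕ) ≤ a * g * h :=
      le_trans (by norm_num) (Nat.mul_le_mul (Nat.mul_le_mul ha (show 3 ≤ g by omega)) hh)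
    calc (4 : ℝ) = ((4 : ℕ) : ℝ) := by norm_num
      _ ≤ ((a * g * h : ℕ) : ℝ) := Nat.cast_le.mpr h4n
      _ = (a : ℝ) * g * h := by push_cast; ring
  have hL2 : 2 * l2 ≤ L := by
    rw [hl2def, hLdef]
    calc 2 * Real.log 2 = Real.log (2 ^ (2:ℕ)) := by rw [Real.log_pow]; push_cast; ring
      _ ≤ Real.log ((a : ℝ) * g * h) := Real.log_le_log (by norm_num) (by norm_num at h4 ⊢; linarith)
  have hL0 : 0 < L := by linarith
  set cg := Real.log g / l2 with hcgdef
  set ch := Real.log h / l2 with hchdef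
  set cL := L / l2 with hcLdef
  have hcg0 : 0 ≤ cg := by positivity
  have hch0 : 0 ≤ ch := by positivity
  have hcL2 : 2 ≤ cL := by rw [hcLdef, le_div_iff₀ l2p]; linarith
  have hGle : ∀ P : ℕ, P.Prime → ((padicValNat P g : ℕ) : ℝ) ≤ cg := by
    intro P hP
    rw [hcgdef, le_div_iff₀ l2p]
    exact valbound P g hP (by omega)
  have hHle : ∀ P : ℕ, P.Prime → ((padicValNat P h : ℕ) : ℝ) ≤ ch := by
    intro P hP
    rw [hchdef, le_div_iff₀ l2p]
    exact valbound P h hP (by omega)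
  have hlogaL : Real.log a ≤ L := by
    rw [hLdef]
    apply Real.log_le_log (by exact_mod_cast ha)
    have haagh : a ≤ a * g * h := by
      calc a = a * 1 * 1 := by ring
        _ ≤ a * g * h := Nat.mul_le_mul (Nat.mul_le_mul (le_refl a) (by omega)) (by omega)
    calc (a : ℝ) ≤ ((a * g * h : ℕ) : ℝ) := Nat.cast_le.mpr haagh
      _ = (a : ℝ) * g * h := by push_cast; ring
  have hlogbL : Real.log b ≤ L := by
    rw [hLdef]
    apply Real.log_le_log (by exact_mod_cast hb)
    calc (b : ℝ) ≤ ((a * g * h : ℕ) : ℝ) := Nat.cast_le.mpr hble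
      _ = (a : ℝ) * g * h := by push_cast; ring
  have hAle : ∀ P : ℕ, P.Prime → |(A P : ℝ)| ≤ cL := by
    intro P hP
    haveI : Fact P.Prime := ⟨hP⟩
    have hAeq : A P = (padicValNat P a : ℤ) - (padicValNat P b : ℤ) := by
      simp only [hAdef]
      rw [hα, padicValRat.div (Nat.cast_ne_zero.mpr ha.ne') (Nat.cast_ne_zero.mpr hb.ne'),
        padicValRat.of_nat, padicValRat.of_nat]
    have h1 := valbound P a hP ha
    have h2 := valbound P b hP hb
    have h1' : ((padicValNat P a : ℕ) : ℝ) ≤ cL := by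
      rw [hcLdef, le_div_iff₀ l2p]; linarith
    have h2' : ((padicValNat P b : ℕ) : ℝ) ≤ cL := by
      rw [hcLdef, le_div_iff₀ l2p]; linarith
    have hn1 : (0:ℝ) ≤ ((padicValNat P a : ℕ) : ℝ) := Nat.cast_nonneg _
    have hn2 : (0:ℝ) ≤ ((padicValNat P b : ℕ) : ℝ) := Nat.cast_nonneg _
    rw [hAeq, Int.cast_sub, Int.cast_natCast, Int.cast_natCast]
    rw [abs_le]
    constructor <;> linarith
  refine ⟨D, X, Y, hD, hreal, ?_, ?_, ?_⟩
  · have e1 : Real.log g * Real.log h * L / l2 ^ 3 = cg * ch + cg * ch * (cL - 1) := by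
      rw [hcgdef, hchdef, hcLdef]; field_simp; ring
    rw [e1]
    have hDr : ((D : ℤ) : ℝ) = ((padicValNat p g : ℕ) : ℝ) * ((padicValNat q h : ℕ) : ℝ)
        - ((padicValNat q g : ℕ) : ℝ) * ((padicValNat p h : ℕ) : ℝ) := by
      simp only [hDdef, hGdef, hHdef]; push_cast [-padicValRat_of_nat]; ring
    rw [hDr]
    have hb1' := abs_sub_mul_le1 (Nat.cast_nonneg _) (hGle p hp) (Nat.cast_nonneg _)
      (hHle q hq) (Nat.cast_nonneg _) (hGle q hq) (Nat.cast_nonneg _) (hHle p hp)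
    have h0 : 0 ≤ cg * ch * (cL - 1) :=
      mul_nonneg (mul_nonneg hcg0 hch0) (by linarith)
    linarith
  · have e1 : Real.log h * L ^ 2 / l2 ^ 3 = 2 * cL * ch + (cL - 2) * cL * ch := by
      rw [hchdef, hcLdef]; field_simp; ring
    rw [e1]
    have hXr : ((X : ℤ) : ℝ) = (A p : ℝ) * ((padicValNat q h : ℕ) : ℝ)
        - (A q : ℝ) * ((padicValNat p h : ℕ) : ℝ) := by
      simp only [hXdef, hHdef]; push_cast [-padicValRat_of_nat]; ring
    rw [hXr]
    have hb1' := abs_sub_mul_le2 (hAle p hp) (hAle q hq) (Nat.cast_nonneg _)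
      (hHle q hq) (Nat.cast_nonneg _) (hHle p hp)
    have h0 : 0 ≤ (cL - 2) * cL * ch :=
      mul_nonneg (mul_nonneg (by linarith) (by linarith)) hch0
    linarith
  · have e1 : Real.log g * L ^ 2 / l2 ^ 3 = 2 * cL * cg + (cL - 2) * cL * cg := by
      rw [hcgdef, hcLdef]; field_simp; ring
    rw [e1]
    have hYr : ((Y : ℤ) : ℝ) = (A q : ℝ) * ((padicValNat p g : ℕ) : ℝ)
        - (A p : ℝ) * ((padicValNat q g : ℕ) : ℝ) := by
      simp only [hYdef, hGdef]; push_cast [-padicValRat_of_nat]; ring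
    rw [hYr]
    have hb1' := abs_sub_mul_le2 (hAle q hq) (hAle p hp) (Nat.cast_nonneg _)
      (hGle p hp) (Nat.cast_nonneg _) (hGle q hq)
    have h0 : 0 ≤ (cL - 2) * cL * cg :=
      mul_nonneg (mul_nonneg (by linarith) (by linarith)) hcg0
    linarith
end

section
/- (Baker–Davenport reduction.) Let ε and δ be real numbers, let c₁, c₂ > 0 be real numbers, let X ≥ 1 be a real number, let n₁ be an integer and n₂ a nonnegative integer with n₂ ≤ X, and suppose |n₁ + n₂·ε + δ| < c₁·exp(−n₂·c₂). Assume there exist a real number κ > 1 and a positive integer q such that ‖q·ε‖ < 1/(2κX) and ‖q·δ‖ > 1/κ, where ‖·‖ denotes the distance to the nearest integer. Then n₂ ≤ log(2·κ·q·c₁)/c₂. -/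
/-- The distance from a real number to the nearest integer. -/
noncomputable def distNearestInt (x : ℝ) : ℝ := |x - (round x : ℤ)|

lemma distNearestInt_le (x : ℝ) (m : ℤ) : distNearestInt x ≤ |x - m| := by
  unfold distNearestInt
  rcases eq_or_ne m (round x) with h | h
  · rw [h]
  · have h1 : (1 : ℝ) ≤ |(round x : ℝ) - m| := by
      have h0 : (1 : ℤ) ≤ |round x - m| :=
        Int.one_le_abs (sub_ne_zero.mpr fun hh => h hh.symm)
      calc (1:ℝ) ≤ ((|round x - m| : ℤ) : ℝ) := by exact_mod_cast h0
        _ = |(round x : ℝ) - m| := by rw [Int.cast_abs]; push_cast; ring_nf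
    have h2 : |x - (round x : ℤ)| ≤ 1/2 := abs_sub_round x
    have h3 : |(round x : ℝ) - m| ≤ |x - round x| + |x - m| := by
      calc |(round x : ℝ) - m| = |((round x : ℝ) - x) + (x - m)| := by ring_nf
        _ ≤ |(round x : ℝ) - x| + |x - m| := abs_add_le _ _
        _ = |x - round x| + |x - m| := by rw [abs_sub_comm]
    linarith

theorem baker_davenport_reduction (ε δ c₁ c₂ X : ℝ)
    (hc₁ : 0 < c₁) (hc₂ : 0 < c₂) (hX : 1 ≤ X)
    (n₁ : ℤ) (n₂ : ℕ) (hn₂ : (n₂ : ℝ) ≤ X)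
    (hineq : |(n₁ : ℝ) + (n₂ : ℝ) * ε + δ| < c₁ * Real.exp (-(n₂ : ℝ) * c₂))
    (κ : ℝ) (hκ : 1 < κ) (q : ℕ) (hq : 0 < q)
    (hqε : distNearestInt ((q : ℝ) * ε) < 1 / (2 * κ * X))
    (hqδ : distNearestInt ((q : ℝ) * δ) > 1 / κ) :
    (n₂ : ℝ) ≤ Real.log (2 * κ * (q : ℝ) * c₁) / c₂ := by
  have hκ0 : (0:ℝ) < κ := by linarith
  have hq0 : (0:ℝ) < (q:ℝ) := by exact_mod_cast hq
  have hX0 : (0:ℝ) < X := by linarith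
  set θ : ℝ := (q:ℝ) * ε - round ((q:ℝ) * ε) with hθ
  set k : ℤ := (q:ℤ) * n₁ + (n₂:ℤ) * round ((q:ℝ) * ε) with hk
  set A : ℝ := (q:ℝ) * δ + (n₂:ℝ) * θ + (k:ℝ) with hA
  have key : (q:ℝ) * ((n₁:ℝ) + (n₂:ℝ) * ε + δ) = A := by
    rw [hA, hk, hθ]; push_cast; ring
  -- upper bound
  have hup : |A| < (q:ℝ) * (c₁ * Real.exp (-(n₂:ℝ) * c₂)) := by
    rw [← key, abs_mul, abs_of_pos hq0]
    exact (mul_lt_mul_iff_right₀ hq0).2 hineq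
  -- lower bound
  have hθabs : |θ| < 1 / (2 * κ * X) := hqε
  have hn₂θ : (n₂:ℝ) * |θ| ≤ 1 / (2 * κ) := by
    have h1 : (n₂:ℝ) * |θ| ≤ X * (1 / (2 * κ * X)) :=
      mul_le_mul hn₂ hθabs.le (abs_nonneg _) (by linarith)
    have h2 : X * (1 / (2 * κ * X)) = 1 / (2 * κ) := by field_simp
    linarith [h1, h2.le]
  have hlow : 1 / (2 * κ) < |A| := by
    have h1 : distNearestInt ((q:ℝ) * δ) ≤ |(q:ℝ) * δ - (-k : ℤ)| :=
      distNearestInt_le _ _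
    have h2 : |(q:ℝ) * δ + (k:ℝ)| ≤ |A| + |(n₂:ℝ) * θ| := by
      calc |(q:ℝ) * δ + (k:ℝ)| = |A - (n₂:ℝ) * θ| := by rw [hA]; ring_nf
        _ ≤ |A| + |(n₂:ℝ) * θ| := abs_sub _ _
    have h3 : |(q:ℝ) * δ - (-k : ℤ)| = |(q:ℝ) * δ + (k:ℝ)| := by push_cast; ring_nf
    have h4 : |(n₂:ℝ) * θ| = (n₂:ℝ) * |θ| := by
      rw [abs_mul, abs_of_nonneg (Nat.cast_nonneg n₂)]
    have h5 : 1 / κ < distNearestInt ((q:ℝ) * δ) := hqδ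
    have : 1/κ - 1/(2*κ) = 1/(2*κ) := by field_simp; ring
    linarith [h1, h2, h4 ▸ hn₂θ]
  -- conclude
  have hexp : Real.exp ((n₂:ℝ) * c₂) < 2 * κ * (q:ℝ) * c₁ := by
    have h1 : 1 / (2 * κ) < (q:ℝ) * c₁ * Real.exp (-(n₂:ℝ) * c₂) := by
      calc 1 / (2 * κ) < |A| := hlow
        _ < (q:ℝ) * (c₁ * Real.exp (-(n₂:ℝ) * c₂)) := hup
        _ = (q:ℝ) * c₁ * Real.exp (-(n₂:ℝ) * c₂) := by ring
    have he : Real.exp (-(n₂:ℝ) * c₂) = (Real.exp ((n₂:ℝ) * c₂))⁻¹ := by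
      rw [← Real.exp_neg]; ring_nf
    have hE : 0 < Real.exp ((n₂:ℝ) * c₂) := Real.exp_pos _
    rw [he] at h1
    have h2 : Real.exp ((n₂:ℝ) * c₂) * (1 / (2 * κ)) < (q:ℝ) * c₁ := by
      calc Real.exp ((n₂:ℝ) * c₂) * (1 / (2 * κ))
          < Real.exp ((n₂:ℝ) * c₂) * ((q:ℝ) * c₁ * (Real.exp ((n₂:ℝ) * c₂))⁻¹) :=
            (mul_lt_mul_iff_right₀ hE).2 h1
        _ = (q:ℝ) * c₁ := by field_simp
    calc Real.exp ((n₂:ℝ) * c₂) = 2 * κ * (Real.exp ((n₂:ℝ) * c₂) * (1 / (2 * κ))) := by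
          field_simp
      _ < 2 * κ * ((q:ℝ) * c₁) := (mul_lt_mul_iff_right₀ (by linarith : (0:ℝ) < 2 * κ)).2 h2
      _ = 2 * κ * (q:ℝ) * c₁ := by ring
  have hlog : (n₂:ℝ) * c₂ < Real.log (2 * κ * (q:ℝ) * c₁) := by
    have := Real.log_lt_log (Real.exp_pos _) hexp
    rwa [Real.log_exp] at this
  rw [le_div_iff₀ hc₂]
  linarith
end
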